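/- Let B be a ring and F₂ a class of right B-modules. Let M be a right B-module with finite F₂-injective dimension, and let P be an exact (unbounded) complex of flat left B-modules such that D ⊗_B P is an exact complex for every D ∈ F₂. Then M ⊗_B P is an exact complex. -/

import Mathlib

/-! Preamble part 1: bundled modules, character modules, duality pairs. -/

open MulOpposite Function

universe u

namespace DualityPairs

/-- A bundled left `R`-module (in universe `u`). -/
structure Mdl (R : Type u) [Ring R] : Type (u + 1) where
  carrier : Type u
  [isAddCommGroup : AddCommGroup carrier]
  [isModule : Module R carrier]

attribute [instance] Mdl.isAddCommGroup Mdl.isModule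

instance {R : Type u} [Ring R] : CoeSort (Mdl R) (Type u) := ⟨Mdl.carrier⟩

/-- Bundle a module. -/
def Mdl.of (R : Type u) [Ring R] (N : Type u) [AddCommGroup N] [Module R N] : Mdl R := ⟨N⟩

/-- The character group `N⁺ = Hom_ℤ(N, ℚ/ℤ)` of an abelian group. -/
def Char (N : Type u) [AddCommGroup N] : Type u := N →+ AddCircle (1 : ℚ)

instance {N : Type u} [AddCommGroup N] : AddCommGroup (Char N) :=
  inferInstanceAs (AddCommGroup (N →+ AddCircle (1 : ℚ)))


instance {N : Type u} [AddCommGroup N] : FunLike (Char N) N (AddCircle (1 : ℚ)) where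
  coe c := c.toFun
  coe_injective f g h := AddMonoidHom.ext (congrFun h)

instance {N : Type u} [AddCommGroup N] : AddMonoidHomClass (Char N) N (AddCircle (1 : ℚ)) where
  map_add c := c.map_add
  map_zero c := c.map_zero

/-- The right `R`-module structure on the character module of a left `R`-module:
`(f • r) (n) = f (r • n)`. -/
instance Char.moduleRight {R : Type u} [Ring R] {N : Type u} [AddCommGroup N] [Module R N] :
    Module Rᵐᵒᵖ (Char N) where
  smul r f := AddMonoidHom.comp (f : N →+ AddCircle (1 : ℚ))
    (DistribMulAction.toAddMonoidHom N r.unop)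
  one_smul f := DFunLike.ext _ _ fun n => by
    show f ((1 : Rᵐᵒᵖ).unop • n) = f n
    rw [unop_one, one_smul]
  mul_smul r s f := DFunLike.ext _ _ fun n => by
    show f ((r * s).unop • n) = f (s.unop • r.unop • n)
    rw [unop_mul, mul_smul]
  smul_zero r := DFunLike.ext _ _ fun n => rfl
  smul_add r f g := DFunLike.ext _ _ fun n => rfl
  add_smul r s f := DFunLike.ext _ _ fun n => by
    show f ((r + s).unop • n) = f (r.unop • n) + f (s.unop • n)
    rw [unop_add, add_smul, map_add]
  zero_smul f := DFunLike.ext _ _ fun n => by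
    show f ((0 : Rᵐᵒᵖ).unop • n) = (0 : Char N) n
    rw [unop_zero, zero_smul, map_zero]; rfl

/-- The left `R`-module structure on the character module of a right `R`-module. -/
instance Char.moduleLeft {R : Type u} [Ring R] {N : Type u} [AddCommGroup N] [Module Rᵐᵒᵖ N] :
    Module R (Char N) where
  smul r f := AddMonoidHom.comp (f : N →+ AddCircle (1 : ℚ))
    (DistribMulAction.toAddMonoidHom N (op r))
  one_smul f := DFunLike.ext _ _ fun n => by
    show f (op (1 : R) • n) = f n
    rw [op_one, one_smul]
  mul_smul r s f := DFunLike.ext _ _ fun n => by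
    show f (op (r * s) • n) = f (op s • op r • n)
    rw [op_mul, mul_smul]
  smul_zero r := DFunLike.ext _ _ fun n => rfl
  smul_add r f g := DFunLike.ext _ _ fun n => rfl
  add_smul r s f := DFunLike.ext _ _ fun n => by
    show f (op (r + s) • n) = f (op r • n) + f (op s • n)
    rw [op_add, add_smul, map_add]
  zero_smul f := DFunLike.ext _ _ fun n => by
    show f (op (0 : R) • n) = (0 : Char N) n
    rw [op_zero, zero_smul, map_zero]; rfl

variable (R : Type u) [Ring R]

/-- A duality pair `(𝓛, 𝓐)` over `R`: a class `𝓛` of left `R`-modules and a class `𝓐` of right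
`R`-modules such that `L ∈ 𝓛 ↔ L⁺ ∈ 𝓐`, and `𝓐` is closed under direct summands and finite
direct sums. -/
structure IsDualityPair (𝓛 : Mdl.{u} R → Prop) (𝓐 : Mdl.{u} Rᵐᵒᵖ → Prop) : Prop where
  char_mem_iff : ∀ N : Mdl.{u} R, 𝓛 N ↔ 𝓐 (Mdl.of Rᵐᵒᵖ (Char N))
  summand : ∀ N N' : Mdl.{u} Rᵐᵒᵖ, 𝓐 N' →
    (∃ (i : N →ₗ[Rᵐᵒᵖ] N') (p : N' →ₗ[Rᵐᵒᵖ] N), p.comp i = LinearMap.id) → 𝓐 N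
  sum : ∀ N N' : Mdl.{u} Rᵐᵒᵖ, 𝓐 N → 𝓐 N' → 𝓐 (Mdl.of Rᵐᵒᵖ (N × N'))

/-- A symmetric duality pair: both `(𝓛, 𝓐)` and `(𝓐, 𝓛)` are duality pairs. -/
structure IsSymmetricDualityPair (𝓛 : Mdl.{u} R → Prop) (𝓐 : Mdl.{u} Rᵐᵒᵖ → Prop)
    extends IsDualityPair R 𝓛 𝓐 : Prop where
  char_mem_iff' : ∀ N : Mdl.{u} Rᵐᵒᵖ, 𝓐 N ↔ 𝓛 (Mdl.of R (Char N))
  summand' : ∀ N N' : Mdl.{u} R, 𝓛 N' →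
    (∃ (i : N →ₗ[R] N') (p : N' →ₗ[R] N), p.comp i = LinearMap.id) → 𝓛 N
  sum' : ∀ N N' : Mdl.{u} R, 𝓛 N → 𝓛 N' → 𝓛 (Mdl.of R (N × N'))

/-- A semi-complete duality pair: a symmetric duality pair which is moreover semi-perfect,
i.e. `R ∈ 𝓛` and `𝓛` is closed under arbitrary direct sums. -/
structure IsSemiCompleteDualityPair (𝓛 : Mdl.{u} R → Prop) (𝓐 : Mdl.{u} Rᵐᵒᵖ → Prop)
    extends IsSymmetricDualityPair R 𝓛 𝓐 : Prop where
  self_mem : 𝓛 (Mdl.of R R)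
  dsum : ∀ (ι : Type u) (f : ι → Mdl.{u} R), (∀ i, 𝓛 (f i)) →
    𝓛 (Mdl.of R (DirectSum ι fun i => (f i : Type u)))

end DualityPairs

namespace DualityPairs

open TensorProduct

noncomputable section

/-- An (unbounded, cochain-indexed) complex of left `R`-modules. -/
structure Cx (R : Type u) [Ring R] : Type (u + 1) where
  X : ℤ → Type u
  [isAddCommGroup : ∀ n, AddCommGroup (X n)]
  [isModule : ∀ n, Module R (X n)]
  d : ∀ n, X n →ₗ[R] X (n + 1)
  dd : ∀ n, (d (n + 1)).comp (d n) = 0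

attribute [instance] Cx.isAddCommGroup Cx.isModule

/-- A complex is exact if at every spot the kernel equals the image. -/
def Cx.Exact {R : Type u} [Ring R] (P : Cx R) : Prop :=
  ∀ (n : ℤ) (x : P.X (n + 1)), P.d (n + 1) x = 0 → ∃ y : P.X n, P.d n y = x

section CTensor

variable (R : Type u) [Ring R]
variable (G : Type u) [AddCommGroup G] [Module Rᵐᵒᵖ G]
variable (N N' : Type u) [AddCommGroup N] [Module R N] [AddCommGroup N'] [Module R N']

/-- The subgroup of `G ⊗_ℤ N` generated by the tensor relations over `R`. -/
def crel : Submodule ℤ (G ⊗[ℤ] N) :=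
  Submodule.span ℤ
    {z | ∃ (g : G) (r : R) (n : N), z = (op r • g) ⊗ₜ[ℤ] n - g ⊗ₜ[ℤ] (r • n)}

/-- The balanced tensor product `G ⊗_R N` of a right `R`-module `G` and a left `R`-module `N`,
as an abelian group. -/
def CTensor : Type u := (G ⊗[ℤ] N) ⧸ crel R G N

instance : AddCommGroup (CTensor R G N) :=
  inferInstanceAs (AddCommGroup ((G ⊗[ℤ] N) ⧸ crel R G N))

instance : Module ℤ (CTensor R G N) :=
  inferInstanceAs (Module ℤ ((G ⊗[ℤ] N) ⧸ crel R G N))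

variable {R G N N'}

/-- The class of the elementary tensor `g ⊗ n` in `G ⊗_R N`. -/
def CTensor.tmul (g : G) (n : N) : CTensor R G N :=
  Submodule.Quotient.mk (g ⊗ₜ[ℤ] n)

variable (R G) in
/-- The map `G ⊗_R N → G ⊗_R N'` induced by an `R`-linear map `N → N'`. -/
def CTensor.mapRight (f : N →ₗ[R] N') : CTensor R G N →ₗ[ℤ] CTensor R G N' :=
  Submodule.mapQ _ _ (LinearMap.lTensor G f.toAddMonoidHom.toIntLinearMap) <| by
    rw [crel, Submodule.span_le]
    rintro z ⟨g, r, n, rfl⟩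
    simp only [SetLike.mem_coe, Submodule.mem_comap, map_sub, LinearMap.lTensor_tmul]
    refine Submodule.subset_span ⟨g, r, f n, ?_⟩
    erw [map_sub, LinearMap.lTensor_tmul, LinearMap.lTensor_tmul]
    simp [map_smul]

variable (R N) in
/-- The map `G ⊗_R N → G' ⊗_R N` induced by a map `G → G'` of right `R`-modules. -/
def CTensor.mapLeft {G' : Type u} [AddCommGroup G'] [Module Rᵐᵒᵖ G'] (f : G →ₗ[Rᵐᵒᵖ] G') :
    CTensor R G N →ₗ[ℤ] CTensor R G' N :=
  Submodule.mapQ _ _ (LinearMap.rTensor N f.toAddMonoidHom.toIntLinearMap) <| by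
    rw [crel, Submodule.span_le]
    rintro z ⟨g, r, n, rfl⟩
    simp only [SetLike.mem_coe, Submodule.mem_comap, map_sub, LinearMap.rTensor_tmul]
    refine Submodule.subset_span ⟨f g, r, n, ?_⟩
    erw [map_sub, LinearMap.rTensor_tmul, LinearMap.rTensor_tmul]
    simp [map_smul]

@[simp] lemma CTensor.mapRight_tmul (f : N →ₗ[R] N') (g : G) (n : N) :
    CTensor.mapRight R G f (CTensor.tmul g n) = CTensor.tmul g (f n) := rfl

end CTensor

section GorensteinDefs

variable (R : Type u) [Ring R]

/-- The complex `G ⊗_R P` (for `P` a complex of left `R`-modules and `G` a right `R`-module)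
is exact. -/
def TensorExact (G : Type u) [AddCommGroup G] [Module Rᵐᵒᵖ G] (P : Cx R) : Prop :=
  ∀ (n : ℤ) (x : CTensor R G (P.X (n + 1))),
    CTensor.mapRight R G (P.d (n + 1)) x = 0 →
      ∃ y : CTensor R G (P.X n), CTensor.mapRight R G (P.d n) y = x

/-- The complex `Hom_R(P, L)` is exact, for `P` a complex of left `R`-modules and `L` a left
`R`-module. -/
def HomIntoExact (P : Cx R) (L : Type u) [AddCommGroup L] [Module R L] : Prop :=
  ∀ (n : ℤ) (f : P.X (n + 1) →ₗ[R] L), f.comp (P.d n) = 0 →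
    ∃ g : P.X (n + 1 + 1) →ₗ[R] L, g.comp (P.d (n + 1)) = f

/-- The complex `Hom_R(G, I)` is exact, for `I` a complex of `R`-modules and `G` an `R`-module. -/
def HomFromExact (G : Type u) [AddCommGroup G] [Module R G] (I : Cx R) : Prop :=
  ∀ (n : ℤ) (f : G →ₗ[R] I.X (n + 1)), (I.d (n + 1)).comp f = 0 →
    ∃ g : G →ₗ[R] I.X n, (I.d n).comp g = f

/-- A left `R`-module `F` is flat if tensoring with it preserves injectivity of maps of
right `R`-modules. -/
def IsFlatMod (F : Type u) [AddCommGroup F] [Module R F] : Prop :=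
  ∀ (G G' : Mdl.{u} Rᵐᵒᵖ) (f : G →ₗ[Rᵐᵒᵖ] G'), Injective f →
    Injective (CTensor.mapLeft R F f)

end GorensteinDefs

end

end DualityPairs

namespace DualityPairs

noncomputable section

open TensorProduct

variable (R : Type u) [Ring R]

/-- `N` is Gorenstein `(𝓛, 𝓐)`-projective: `N` is a cycle of an exact complex of projective
left `R`-modules which stays exact when tensored with any member of `𝓐`. -/
def IsGorensteinProjective (𝓐 : Mdl.{u} Rᵐᵒᵖ → Prop)
    (N : Type u) [AddCommGroup N] [Module R N] : Prop :=
  ∃ P : Cx R, (∀ n, Module.Projective R (P.X n)) ∧ P.Exact ∧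
    (∀ G : Mdl.{u} Rᵐᵒᵖ, 𝓐 G → TensorExact R G P) ∧
    Nonempty (N ≃ₗ[R] LinearMap.ker (P.d 0))

/-- `N` is `(𝓛, 𝓐)`-Gorenstein projective: `N` is a cycle of an exact complex of projective
left `R`-modules which stays exact under `Hom_R(-, L)` for every `L ∈ 𝓛`. -/
def IsDGorensteinProjective (𝓛 : Mdl.{u} R → Prop)
    (N : Type u) [AddCommGroup N] [Module R N] : Prop :=
  ∃ P : Cx R, (∀ n, Module.Projective R (P.X n)) ∧ P.Exact ∧
    (∀ L : Mdl.{u} R, 𝓛 L → HomIntoExact R P L) ∧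
    Nonempty (N ≃ₗ[R] LinearMap.ker (P.d 0))

/-- `N` is Gorenstein `(𝓛, 𝓐)`-injective: `N` is a cycle of an exact complex of injective
`R`-modules which stays exact under `Hom_R(G, -)` for every `G ∈ 𝓐`.  (Apply this to the
ring `Rᵐᵒᵖ` to speak about right `R`-modules.) -/
def IsGorensteinInjective (𝓐 : Mdl.{u} R → Prop)
    (N : Type u) [AddCommGroup N] [Module R N] : Prop :=
  ∃ I : Cx R, (∀ n, Module.Injective R (I.X n)) ∧ I.Exact ∧
    (∀ G : Mdl.{u} R, 𝓐 G → HomFromExact R G I) ∧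
    Nonempty (N ≃ₗ[R] LinearMap.ker (I.d 0))

/-- `N` is Gorenstein `(𝓛, 𝓐)`-flat: `N` is a cycle of an exact complex of flat
left `R`-modules which stays exact when tensored with any member of `𝓐`. -/
def IsGorensteinFlat (𝓐 : Mdl.{u} Rᵐᵒᵖ → Prop)
    (N : Type u) [AddCommGroup N] [Module R N] : Prop :=
  ∃ F : Cx R, (∀ n, IsFlatMod R (F.X n)) ∧ F.Exact ∧
    (∀ G : Mdl.{u} Rᵐᵒᵖ, 𝓐 G → TensorExact R G F) ∧
    Nonempty (N ≃ₗ[R] LinearMap.ker (F.d 0))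

/-- `N` has a finite coresolution `0 → N → X⁰ → X¹ → ⋯ → Xⁿ → 0` with all `Xⁱ` in the
class `𝓧`; i.e. `N` has finite `𝓧`-injective dimension. -/
def FiniteXInjDim (𝓧 : Mdl.{u} R → Prop) (N : Type u) [AddCommGroup N] [Module R N] : Prop :=
  ∃ (n : ℕ) (C : Cx R),
    (∀ i : ℤ, i < 0 ∨ (n : ℤ) < i → Subsingleton (C.X i)) ∧
    (∀ i : ℤ, 0 ≤ i → i ≤ (n : ℤ) → 𝓧 (Mdl.of R (C.X i))) ∧
    (∀ (i : ℤ), 0 ≤ i → ∀ x : C.X (i + 1), C.d (i + 1) x = 0 → ∃ y : C.X i, C.d i y = x) ∧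
    Nonempty (N ≃ₗ[R] LinearMap.ker (C.d 0))

/-- `N` has a finite resolution `0 → Xₙ → ⋯ → X₁ → X₀ → N → 0` with all `Xᵢ` in the class `𝓧`;
i.e. `N` has finite `𝓧`-projective (e.g. flat) dimension.  (The complex is indexed so that
`C.X 0 = Xₙ, …, C.X n = X₀`.) -/
def FiniteXProjDim (𝓧 : Mdl.{u} R → Prop) (N : Type u) [AddCommGroup N] [Module R N] : Prop :=
  ∃ (n : ℕ) (C : Cx R),
    (∀ i : ℤ, i < 0 ∨ (n : ℤ) < i → Subsingleton (C.X i)) ∧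
    (∀ i : ℤ, 0 ≤ i → i ≤ (n : ℤ) → 𝓧 (Mdl.of R (C.X i))) ∧
    (∀ (i : ℤ), -1 ≤ i → i + 1 < (n : ℤ) →
      ∀ x : C.X (i + 1), C.d (i + 1) x = 0 → ∃ y : C.X i, C.d i y = x) ∧
    Nonempty (N ≃ₗ[R] (C.X ((n : ℤ) - 1 + 1) ⧸ LinearMap.range (C.d ((n : ℤ) - 1))))

/-- `M` has finite flat dimension. -/
def FiniteFlatDim (M : Type u) [AddCommGroup M] [Module R M] : Prop :=
  FiniteXProjDim R (fun F => IsFlatMod R F.carrier) M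

/-- `M` has finite injective dimension. -/
def FiniteInjDim (M : Type u) [AddCommGroup M] [Module R M] : Prop :=
  FiniteXInjDim R (fun E => Module.Injective R E.carrier) M

end

end DualityPairs

namespace DualityPairs

noncomputable section

open TensorProduct

set_option linter.unusedSectionVars false

/-- The underlying set of the upper triangular matrix ring `T = (A M; 0 B)` attached to two
rings `A`, `B` and an `(A,B)`-bimodule `M`. -/
@[ext] structure Triang (A M B : Type u) where
  a : A
  m : M
  b : B

namespace Triang

variable {A M B : Type u}

section add

variable [AddCommGroup A] [AddCommGroup M] [AddCommGroup B]

instance : Add (Triang A M B) := ⟨fun x y => ⟨x.a + y.a, x.m + y.m, x.b + y.b⟩⟩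
instance : Zero (Triang A M B) := ⟨⟨0, 0, 0⟩⟩
instance : Neg (Triang A M B) := ⟨fun x => ⟨-x.a, -x.m, -x.b⟩⟩
instance : Sub (Triang A M B) := ⟨fun x y => ⟨x.a - y.a, x.m - y.m, x.b - y.b⟩⟩

@[simp] lemma add_a (x y : Triang A M B) : (x + y).a = x.a + y.a := rfl
@[simp] lemma add_m (x y : Triang A M B) : (x + y).m = x.m + y.m := rfl
@[simp] lemma add_b (x y : Triang A M B) : (x + y).b = x.b + y.b := rfl
@[simp] lemma zero_a : (0 : Triang A M B).a = 0 := rfl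
@[simp] lemma zero_m : (0 : Triang A M B).m = 0 := rfl
@[simp] lemma zero_b : (0 : Triang A M B).b = 0 := rfl
@[simp] lemma neg_a (x : Triang A M B) : (-x).a = -x.a := rfl
@[simp] lemma neg_m (x : Triang A M B) : (-x).m = -x.m := rfl
@[simp] lemma neg_b (x : Triang A M B) : (-x).b = -x.b := rfl

instance addCommGroup : AddCommGroup (Triang A M B) where
  add_assoc x y z := by ext <;> simp [add_assoc]
  zero_add x := by ext <;> simp
  add_zero x := by ext <;> simp
  add_comm x y := by ext <;> simp [add_comm]
  neg_add_cancel x := by ext <;> simp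
  sub_eq_add_neg x y := by
    ext <;> exact sub_eq_add_neg _ _
  nsmul := nsmulRec
  zsmul := zsmulRec

end add

section ring

variable [Ring A] [Ring B] [AddCommGroup M] [Module A M] [Module Bᵐᵒᵖ M]
variable [SMulCommClass A Bᵐᵒᵖ M]

instance : One (Triang A M B) := ⟨⟨1, 0, 1⟩⟩
instance : Mul (Triang A M B) :=
  ⟨fun x y => ⟨x.a * y.a, x.a • y.m + op y.b • x.m, x.b * y.b⟩⟩

@[simp] lemma one_a : (1 : Triang A M B).a = 1 := rfl
@[simp] lemma one_m : (1 : Triang A M B).m = 0 := rfl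
@[simp] lemma one_b : (1 : Triang A M B).b = 1 := rfl
@[simp] lemma mul_a (x y : Triang A M B) : (x * y).a = x.a * y.a := rfl
@[simp] lemma mul_m (x y : Triang A M B) : (x * y).m = x.a • y.m + op y.b • x.m := rfl
@[simp] lemma mul_b (x y : Triang A M B) : (x * y).b = x.b * y.b := rfl

/-- The upper triangular matrix ring `T = (A M; 0 B)`. -/
instance ring : Ring (Triang A M B) where
  __ := Triang.addCommGroup
  mul_assoc x y z := by
    ext
    · simp [mul_assoc]
    · simp only [mul_m, mul_a, mul_b, smul_add, add_smul, mul_smul, op_mul, smul_comm]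
      abel
    · simp [mul_assoc]
  one_mul x := by ext <;> simp
  mul_one x := by ext <;> simp
  left_distrib x y z := by
    ext
    · simp [mul_add]
    · simp only [mul_m, add_m, add_a, add_b, smul_add, add_smul, op_add]
      abel
    · simp [mul_add]
  right_distrib x y z := by
    ext
    · simp [add_mul]
    · simp only [mul_m, add_m, add_a, add_b, smul_add, add_smul, op_add]
      abel
    · simp [add_mul]
  zero_mul x := by ext <;> simp
  mul_zero x := by ext <;> simp

end ring

end Triang

end

end DualityPairs

namespace DualityPairs

noncomputable section

open TensorProduct

variable (A B : Type u) [Ring A] [Ring B]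
variable (M : Type u) [AddCommGroup M] [Module A M] [Module Bᵐᵒᵖ M] [SMulCommClass A Bᵐᵒᵖ M]

section MTensor

variable (X : Type u) [AddCommGroup X] [Module B X]
set_option linter.unusedSectionVars false

/-- The `A`-submodule of relations defining `M ⊗_B X`. -/
def mrel : Submodule A (M ⊗[ℤ] X) :=
  Submodule.span A
    {z | ∃ (m : M) (b : B) (x : X), z = (op b • m) ⊗ₜ[ℤ] x - m ⊗ₜ[ℤ] (b • x)}

/-- The balanced tensor product `M ⊗_B X` of the `(A,B)`-bimodule `M` and a left `B`-module
`X`; it is a left `A`-module. -/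
def MTensor : Type u := (M ⊗[ℤ] X) ⧸ mrel A B M X

instance : AddCommGroup (MTensor A B M X) :=
  inferInstanceAs (AddCommGroup ((M ⊗[ℤ] X) ⧸ mrel A B M X))

instance : Module A (MTensor A B M X) :=
  inferInstanceAs (Module A ((M ⊗[ℤ] X) ⧸ mrel A B M X))

variable {A B M X}

/-- The class of the elementary tensor `m ⊗ x` in `M ⊗_B X`. -/
def MTensor.tmul (m : M) (x : X) : MTensor A B M X :=
  Submodule.Quotient.mk (m ⊗ₜ[ℤ] x)

@[simp] lemma MTensor.tmul_add (m : M) (x y : X) :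
    (MTensor.tmul m (x + y) : MTensor A B M X) = MTensor.tmul m x + MTensor.tmul m y := by
  rw [MTensor.tmul, TensorProduct.tmul_add, Submodule.Quotient.mk_add]; rfl

@[simp] lemma MTensor.add_tmul (m m' : M) (x : X) :
    (MTensor.tmul (m + m') x : MTensor A B M X) = MTensor.tmul m x + MTensor.tmul m' x := by
  rw [MTensor.tmul, TensorProduct.add_tmul, Submodule.Quotient.mk_add]; rfl

@[simp] lemma MTensor.smul_tmul (a : A) (m : M) (x : X) :
    (MTensor.tmul (a • m) x : MTensor A B M X) = a • MTensor.tmul m x := by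
  rw [MTensor.tmul, ← TensorProduct.smul_tmul', Submodule.Quotient.mk_smul]; rfl

@[simp] lemma MTensor.zero_tmul (x : X) :
    (MTensor.tmul (0 : M) x : MTensor A B M X) = 0 := by
  rw [MTensor.tmul, TensorProduct.zero_tmul]; exact Submodule.Quotient.mk_zero _

@[simp] lemma MTensor.tmul_zero (m : M) :
    (MTensor.tmul m (0 : X) : MTensor A B M X) = 0 := by
  rw [MTensor.tmul, TensorProduct.tmul_zero]; exact Submodule.Quotient.mk_zero _

/-- The balance relation `(m · b) ⊗ x = m ⊗ (b · x)` in `M ⊗_B X`. -/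
lemma MTensor.balance (m : M) (b : B) (x : X) :
    (MTensor.tmul (op b • m) x : MTensor A B M X) = MTensor.tmul m (b • x) := by
  rw [MTensor.tmul, MTensor.tmul]
  exact (Submodule.Quotient.eq _).2 (Submodule.subset_span ⟨m, b, x, rfl⟩)

end MTensor

end

end DualityPairs

namespace DualityPairs

noncomputable section

open TensorProduct

variable (A B : Type u) [Ring A] [Ring B]
variable (M : Type u) [AddCommGroup M] [Module A M] [Module Bᵐᵒᵖ M] [SMulCommClass A Bᵐᵒᵖ M]

section LeftTriple

variable {X₁ X₂ : Type u} [AddCommGroup X₁] [Module A X₁] [AddCommGroup X₂] [Module B X₂]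

variable {A B M}

/-- The left `T`-module structure on `X₁ × X₂` determined by a triple
`(X₁, X₂, φ : M ⊗_B X₂ → X₁)`. -/
def leftTripleModule (φ : MTensor A B M X₂ →ₗ[A] X₁) :
    Module (Triang A M B) (X₁ × X₂) where
  smul t x := (t.a • x.1 + φ (MTensor.tmul t.m x.2), t.b • x.2)
  one_smul x := by
    show ((1 : Triang A M B).a • x.1 + φ (MTensor.tmul (1 : Triang A M B).m x.2),
      (1 : Triang A M B).b • x.2) = x
    simp
  mul_smul s t x := by
    show ((s * t).a • x.1 + φ (MTensor.tmul (s * t).m x.2), (s * t).b • x.2)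
      = (s.a • (t.a • x.1 + φ (MTensor.tmul t.m x.2)) +
          φ (MTensor.tmul s.m (t.b • x.2)), s.b • t.b • x.2)
    have h : φ (MTensor.tmul (op t.b • s.m) x.2) = φ (MTensor.tmul s.m (t.b • x.2)) := by
      rw [MTensor.balance]
    ext
    · show (s.a * t.a) • x.1 + φ (MTensor.tmul (s.a • t.m + op t.b • s.m) x.2) = _
      simp only [MTensor.add_tmul, MTensor.smul_tmul, map_add, map_smul, mul_smul, smul_add, h]
      abel
    · exact mul_smul s.b t.b x.2
  smul_zero t := by
    show (t.a • (0 : X₁) + φ (MTensor.tmul t.m (0 : X₂)), t.b • (0 : X₂)) = 0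
    simp
  smul_add t x y := by
    show (t.a • (x.1 + y.1) + φ (MTensor.tmul t.m (x.2 + y.2)), t.b • (x.2 + y.2)) = _
    ext
    · show _ = (t.a • x.1 + φ (MTensor.tmul t.m x.2)) + (t.a • y.1 + φ (MTensor.tmul t.m y.2))
      simp only [MTensor.tmul_add, map_add, smul_add]
      abel
    · exact smul_add t.b x.2 y.2
  add_smul s t x := by
    show ((s + t).a • x.1 + φ (MTensor.tmul (s + t).m x.2), (s + t).b • x.2) = _
    ext
    · show (s.a + t.a) • x.1 + φ (MTensor.tmul (s.m + t.m) x.2)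
        = (s.a • x.1 + φ (MTensor.tmul s.m x.2)) + (t.a • x.1 + φ (MTensor.tmul t.m x.2))
      simp only [MTensor.add_tmul, map_add, add_smul]
      abel
    · exact add_smul s.b t.b x.2
  zero_smul x := by
    show ((0 : Triang A M B).a • x.1 + φ (MTensor.tmul (0 : Triang A M B).m x.2),
      (0 : Triang A M B).b • x.2) = 0
    simp

/-- The left `T`-module attached to a triple `(X₁, X₂, φ)`, as a bundled module. -/
def leftTriple (φ : MTensor A B M X₂ →ₗ[A] X₁) : Mdl (Triang A M B) :=
  @Mdl.mk (Triang A M B) _ (X₁ × X₂) _ (leftTripleModule φ)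

end LeftTriple

end

end DualityPairs

namespace DualityPairs

noncomputable section

open TensorProduct

variable (A B : Type u) [Ring A] [Ring B]
variable (M : Type u) [AddCommGroup M] [Module A M] [Module Bᵐᵒᵖ M] [SMulCommClass A Bᵐᵒᵖ M]

section HomModule

variable (D : Type u) [AddCommGroup D] [Module Bᵐᵒᵖ D]

/-- For a right `B`-module `D`, the group `Hom_B(M, D)` of `B`-linear maps is a right
`A`-module via `(f · a) (m) = f (a • m)`. -/
instance homModule : Module Aᵐᵒᵖ (M →ₗ[Bᵐᵒᵖ] D) where
  smul a f :=
    { toFun := fun m => f (a.unop • m)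
      map_add' := fun m m' => by
        show f (a.unop • (m + m')) = f (a.unop • m) + f (a.unop • m')
        rw [smul_add, map_add]
      map_smul' := fun b m => by
        simp only [RingHom.id_apply]
        rw [smul_comm, map_smul] }
  one_smul f := LinearMap.ext fun m => by
    show f ((1 : Aᵐᵒᵖ).unop • m) = f m
    rw [unop_one, one_smul]
  mul_smul a a' f := LinearMap.ext fun m => by
    show f ((a * a').unop • m) = f (a'.unop • a.unop • m)
    rw [unop_mul, mul_smul]
  smul_zero a := LinearMap.ext fun m => rfl
  smul_add a f g := LinearMap.ext fun m => rfl
  add_smul a a' f := LinearMap.ext fun m => by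
    show f ((a + a').unop • m) = f (a.unop • m) + f (a'.unop • m)
    rw [unop_add, add_smul, map_add]
  zero_smul f := LinearMap.ext fun m => by
    show f ((0 : Aᵐᵒᵖ).unop • m) = 0
    rw [unop_zero, zero_smul, map_zero]

@[simp] lemma homModule_smul_apply (a : Aᵐᵒᵖ) (f : M →ₗ[Bᵐᵒᵖ] D) (m : M) :
    (a • f) m = f (a.unop • m) := rfl

end HomModule

section RightTriple

variable {W₁ W₂ : Type u} [AddCommGroup W₁] [Module Aᵐᵒᵖ W₁] [AddCommGroup W₂] [Module Bᵐᵒᵖ W₂]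

variable {A B M}

/-- The right `T`-module structure on `W₁ × W₂` determined by a triple `(W₁, W₂, φ)` of a right
`A`-module `W₁`, a right `B`-module `W₂` and a balanced map `φ : W₁ ⊗_A M → W₂`, here encoded
by its adjoint `ρ = φ̃ : W₁ → Hom_B(M, W₂)`, `ρ w m = φ (w ⊗ m)`. -/
def rightTripleModule (ρ : W₁ →+ (M →ₗ[Bᵐᵒᵖ] W₂))
    (hρ : ∀ (a : A) (w : W₁) (m : M), ρ (op a • w) m = ρ w (a • m)) :
    Module (Triang A M B)ᵐᵒᵖ (W₁ × W₂) where
  smul t w := (op t.unop.a • w.1, ρ w.1 t.unop.m + op t.unop.b • w.2)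
  one_smul w := by
    show (op (1 : Triang A M B).a • w.1, ρ w.1 (1 : Triang A M B).m
      + op (1 : Triang A M B).b • w.2) = w
    simp
  mul_smul x y w := by
    show (op ((y.unop * x.unop).a) • w.1,
        ρ w.1 ((y.unop * x.unop).m) + op ((y.unop * x.unop).b) • w.2)
      = (op x.unop.a • (op y.unop.a • w.1),
        ρ (op y.unop.a • w.1) x.unop.m + op x.unop.b • (ρ w.1 y.unop.m + op y.unop.b • w.2))
    ext
    · show op (y.unop.a * x.unop.a) • w.1 = _
      rw [op_mul, mul_smul]
    · show ρ w.1 (y.unop.a • x.unop.m + op x.unop.b • y.unop.m)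
          + op (y.unop.b * x.unop.b) • w.2 = _
      rw [map_add, op_mul, mul_smul, hρ, LinearMap.map_smul, smul_add]
      abel
  smul_zero t := by
    show (op t.unop.a • (0 : W₁), ρ (0 : W₁) t.unop.m + op t.unop.b • (0 : W₂)) = 0
    simp
  smul_add t w v := by
    show (op t.unop.a • (w.1 + v.1), ρ (w.1 + v.1) t.unop.m + op t.unop.b • (w.2 + v.2)) = _
    ext
    · exact smul_add _ w.1 v.1
    · show _ = (ρ w.1 t.unop.m + op t.unop.b • w.2) + (ρ v.1 t.unop.m + op t.unop.b • v.2)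
      simp only [map_add, LinearMap.add_apply, smul_add]
      abel
  add_smul x y w := by
    show (op ((x + y).unop.a) • w.1, ρ w.1 ((x + y).unop.m) + op ((x + y).unop.b) • w.2) = _
    ext
    · show op (x.unop.a + y.unop.a) • w.1 = _
      rw [op_add, add_smul]
      rfl
    · show ρ w.1 (x.unop.m + y.unop.m) + op (x.unop.b + y.unop.b) • w.2 = _
      rw [map_add, op_add, add_smul]
      show _ = (ρ w.1 x.unop.m + op x.unop.b • w.2) + (ρ w.1 y.unop.m + op y.unop.b • w.2)
      abel
  zero_smul w := by
    show (op ((0 : (Triang A M B)ᵐᵒᵖ).unop.a) • w.1,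
      ρ w.1 ((0 : (Triang A M B)ᵐᵒᵖ).unop.m) + op ((0 : (Triang A M B)ᵐᵒᵖ).unop.b) • w.2) = 0
    show (op ((0 : Triang A M B).a) • w.1,
      ρ w.1 ((0 : Triang A M B).m) + op ((0 : Triang A M B).b) • w.2) = 0
    simp

/-- The right `T`-module attached to a triple `(W₁, W₂, φ̃)`, as a bundled module. -/
def rightTriple (ρ : W₁ →+ (M →ₗ[Bᵐᵒᵖ] W₂))
    (hρ : ∀ (a : A) (w : W₁) (m : M), ρ (op a • w) m = ρ w (a • m)) :
    Mdl (Triang A M B)ᵐᵒᵖ :=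
  @Mdl.mk (Triang A M B)ᵐᵒᵖ _ (W₁ × W₂) _ (rightTripleModule ρ hρ)

/-- The kernel of `φ̃ : W₁ → Hom_B(M, W₂)`, a right `A`-submodule of `W₁`. -/
def tildeKer (ρ : W₁ →+ (M →ₗ[Bᵐᵒᵖ] W₂))
    (hρ : ∀ (a : A) (w : W₁) (m : M), ρ (op a • w) m = ρ w (a • m)) :
    Submodule Aᵐᵒᵖ W₁ where
  carrier := {w | ρ w = 0}
  add_mem' := by
    intro w v hw hv
    show ρ (w + v) = 0
    rw [map_add, hw, hv, add_zero]
  zero_mem' := by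
    show ρ 0 = 0
    rw [map_zero]
  smul_mem' := by
    intro a w hw
    show ρ (a • w) = 0
    ext m
    have : a • w = op a.unop • w := by rw [op_unop]
    rw [this, hρ]
    rw [show (ρ w : M →ₗ[Bᵐᵒᵖ] W₂) = 0 from hw]
    rfl

end RightTriple

end

end DualityPairs

namespace DualityPairs

noncomputable section

open TensorProduct

variable (A B : Type u) [Ring A] [Ring B]
variable (M : Type u) [AddCommGroup M] [Module A M] [Module Bᵐᵒᵖ M] [SMulCommClass A Bᵐᵒᵖ M]

/-- The class `𝔅^{𝓒₁}_{𝓕₁}` of left `T`-modules: those isomorphic to a triple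
`(X₁, X₂, φ)` with `φ` injective, `Coker φ ∈ 𝓒₁` and `X₂ ∈ 𝓕₁`. -/
def BCl (𝓒₁ : Mdl.{u} A → Prop) (𝓕₁ : Mdl.{u} B → Prop) :
    Mdl.{u} (Triang A M B) → Prop := fun N =>
  ∃ (X₁ : Mdl.{u} A) (X₂ : Mdl.{u} B) (φ : MTensor A B M X₂ →ₗ[A] X₁),
    Nonempty (N ≃ₗ[Triang A M B] leftTriple φ) ∧
    Function.Injective φ ∧
    𝓒₁ (Mdl.of A ((X₁ : Type u) ⧸ LinearMap.range φ)) ∧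
    𝓕₁ X₂

/-- The class `𝔗_{𝓒₂,𝓕₂}` of right `T`-modules: those isomorphic to a triple
`(W₁, W₂, φ)` with `φ̃` surjective, `Ker φ̃ ∈ 𝓒₂` and `W₂ ∈ 𝓕₂`. -/
def TCl (𝓒₂ : Mdl.{u} Aᵐᵒᵖ → Prop) (𝓕₂ : Mdl.{u} Bᵐᵒᵖ → Prop) :
    Mdl.{u} (Triang A M B)ᵐᵒᵖ → Prop := fun N =>
  ∃ (W₁ : Mdl.{u} Aᵐᵒᵖ) (W₂ : Mdl.{u} Bᵐᵒᵖ) (ρ : W₁ →+ (M →ₗ[Bᵐᵒᵖ] W₂))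
    (hρ : ∀ (a : A) (w : W₁) (m : M), ρ (op a • w) m = ρ w (a • m)),
    Nonempty (N ≃ₗ[(Triang A M B)ᵐᵒᵖ] rightTriple ρ hρ) ∧
    Function.Surjective ρ ∧
    𝓒₂ (Mdl.of Aᵐᵒᵖ (tildeKer ρ hρ)) ∧
    𝓕₂ W₂

end

end DualityPairs

namespace DualityPairs

noncomputable section

open TensorProduct

variable (S : Type u) [Ring S]

/-- A submodule `K ≤ N` is pure if `0 → K → N → N/K → 0` stays exact after tensoring with any
(right) module, i.e. `G ⊗ K → G ⊗ N` is injective for every `G`. -/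
def IsPureSubmodule {N : Type u} [AddCommGroup N] [Module S N] (K : Submodule S N) : Prop :=
  ∀ G : Mdl.{u} Sᵐᵒᵖ, Function.Injective (CTensor.mapRight S (G : Type u) K.subtype)

/-- A class of left `S`-modules is definable if it is closed under direct products, directed
colimits and pure submodules. -/
def IsDefinableClass (𝓒 : Mdl.{u} S → Prop) : Prop :=
  (∀ (ι : Type u) (f : ι → Mdl.{u} S), (∀ i, 𝓒 (f i)) →
      𝓒 (Mdl.of S (∀ i, (f i : Type u)))) ∧
  (∀ (ι : Type u) [Preorder ι], IsDirected ι (· ≤ ·) → Nonempty ι →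
    ∀ (F : ι → Mdl.{u} S) (t : ∀ i j, i ≤ j → (F i : Type u) →ₗ[S] F j),
      (∀ (i : ι) (x : F i), t i i le_rfl x = x) →
      (∀ (i j k : ι) (hij : i ≤ j) (hjk : j ≤ k) (x : F i),
        t j k hjk (t i j hij x) = t i k (hij.trans hjk) x) →
    ∀ (C : Mdl.{u} S) (g : ∀ i, (F i : Type u) →ₗ[S] C),
      (∀ (i j : ι) (hij : i ≤ j) (x : F i), g j (t i j hij x) = g i x) →
      (∀ c : C, ∃ (i : ι) (x : F i), g i x = c) →
      (∀ (i : ι) (x : F i), g i x = 0 → ∃ (j : ι) (hij : i ≤ j), t i j hij x = 0) →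
      (∀ i, 𝓒 (F i)) → 𝓒 C) ∧
  (∀ (N : Mdl.{u} S) (K : Submodule S (N : Type u)), 𝓒 N → IsPureSubmodule S K →
      𝓒 (Mdl.of S K))

/-- The smallest definable class of left `S`-modules containing a given collection. -/
def definableClosure (Base : Mdl.{u} S → Prop) : Mdl.{u} S → Prop := fun N =>
  ∀ 𝓒 : Mdl.{u} S → Prop, IsDefinableClass S 𝓒 → (∀ X, Base X → 𝓒 X) → 𝓒 N

/-- `⟨F_S⟩`: the definable class of left `S`-modules generated by the flat modules. -/
def FDef : Mdl.{u} S → Prop :=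
  definableClosure S (fun F => IsFlatMod S (F : Type u))

/-- `⟨I_R⟩`: the definable class of right `R`-modules generated by the injective modules. -/
def IDef (R : Type u) [Ring R] : Mdl.{u} Rᵐᵒᵖ → Prop :=
  definableClosure Rᵐᵒᵖ (fun E => Module.Injective Rᵐᵒᵖ (E : Type u))

/-- A module `E` is FP-injective (absolutely pure) if `Ext¹(F, E) = 0` for every finitely
presented module `F`, i.e. every short exact sequence `0 → E → Y → F → 0` with `F` finitely
presented splits. -/
def IsFPInjective (E : Type u) [AddCommGroup E] [Module S E] : Prop :=
  ∀ (Y F : Mdl.{u} S), Module.FinitePresentation S (F : Type u) →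
    ∀ (i : E →ₗ[S] Y) (p : (Y : Type u) →ₗ[S] F), Function.Injective i → Function.Surjective p →
      LinearMap.range i = LinearMap.ker p →
      ∃ r : (Y : Type u) →ₗ[S] E, r.comp i = LinearMap.id

/-- `N` is Ding injective: `N` is a cycle of an exact complex of injective modules which stays
exact under `Hom(E, -)` for every FP-injective module `E`.  (Apply this to `Rᵐᵒᵖ` to speak
about right `R`-modules.) -/
def IsDingInjective (N : Type u) [AddCommGroup N] [Module S N] : Prop :=
  ∃ I : Cx S, (∀ n, Module.Injective S (I.X n)) ∧ I.Exact ∧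
    (∀ E : Mdl.{u} S, IsFPInjective S (E : Type u) → HomFromExact S (E : Type u) I) ∧
    Nonempty (N ≃ₗ[S] LinearMap.ker (I.d 0))

/-- `N` is projectively coresolved Gorenstein flat (PGF): a cycle of an exact complex of
projectives which stays exact after tensoring with any injective right module. -/
def IsPGF (R : Type u) [Ring R] (N : Type u) [AddCommGroup N] [Module R N] : Prop :=
  IsGorensteinProjective R (fun G => Module.Injective Rᵐᵒᵖ (G : Type u)) N

/-- `N` is Gorenstein flat: a cycle of an exact complex of flat modules which stays exact
after tensoring with any injective right module. -/
def IsGorensteinFlatAbs (R : Type u) [Ring R] (N : Type u) [AddCommGroup N] [Module R N] :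
    Prop :=
  IsGorensteinFlat R (fun G => Module.Injective Rᵐᵒᵖ (G : Type u)) N

/-- `P` is a projective resolution `⋯ → P₁ → P₀ → G → 0` of `G`, encoded as an exact complex
with `P.X n` projective for `n ≤ -1`, `P.X n = 0` for `n ≥ 1` and `P.X 0 ≅ G`. -/
def IsProjResolution (G : Type u) [AddCommGroup G] [Module S G] (P : Cx S) : Prop :=
  (∀ n : ℤ, n ≤ -1 → Module.Projective S (P.X n)) ∧
  (∀ n : ℤ, 1 ≤ n → Subsingleton (P.X n)) ∧
  P.Exact ∧
  Nonempty (G ≃ₗ[S] P.X 0)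

/-- `I` is an injective coresolution `0 → E → I⁰ → I¹ → ⋯` of `E`, encoded as a complex with
`I.X n` injective for `n ≥ 0`, `I.X n = 0` for `n ≤ -1`, exact at all spots `≥ 1`, and
`E ≅ ker (I⁰ → I¹)`. -/
def IsInjCoresolution (E : Type u) [AddCommGroup E] [Module S E] (I : Cx S) : Prop :=
  (∀ n : ℤ, 0 ≤ n → Module.Injective S (I.X n)) ∧
  (∀ n : ℤ, n ≤ -1 → Subsingleton (I.X n)) ∧
  (∀ n : ℤ, 0 ≤ n → ∀ x : I.X (n + 1), I.d (n + 1) x = 0 → ∃ y : I.X n, I.d n y = x) ∧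
  Nonempty (E ≃ₗ[S] LinearMap.ker (I.d 0))

end

end DualityPairs

/-!
Split a finite coresolution `0 → M → X⁰ → ⋯ → Xⁿ → 0` into short exact sequences
`0 → Zⁱ → Xⁱ → Zⁱ⁺¹ → 0` of cycles, with `Z⁰ ≅ M` and `Zⁿ ≅ Xⁿ`. Since the terms of `P` are flat,
`- ⊗_B P` turns each of them into a short exact sequence of complexes, and its long exact
homology sequence shows that `Zⁱ ⊗_B P` is exact as soon as `Xⁱ ⊗_B P` and `Zⁱ⁺¹ ⊗_B P` are.
Descending induction on `i` gives the exactness of `M ⊗_B P`.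
-/

namespace DualityPairs

open TensorProduct MulOpposite Function

variable {R : Type u} [Ring R]

namespace CTensor

variable {G G' G'' : Type u} [AddCommGroup G] [Module Rᵐᵒᵖ G]
  [AddCommGroup G'] [Module Rᵐᵒᵖ G'] [AddCommGroup G''] [Module Rᵐᵒᵖ G'']
variable {N N' N'' : Type u} [AddCommGroup N] [Module R N]
  [AddCommGroup N'] [Module R N'] [AddCommGroup N''] [Module R N'']

lemma mapLeft_mk (f : G →ₗ[Rᵐᵒᵖ] G') (t : G ⊗[ℤ] N) :
    mapLeft R N f (Submodule.Quotient.mk t) =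
      (Submodule.Quotient.mk (LinearMap.rTensor N f.toAddMonoidHom.toIntLinearMap t) :
        CTensor R G' N) :=
  rfl

lemma mapRight_mk (d : N →ₗ[R] N') (t : G ⊗[ℤ] N) :
    mapRight R G d (Submodule.Quotient.mk t) =
      (Submodule.Quotient.mk (LinearMap.lTensor G d.toAddMonoidHom.toIntLinearMap t) :
        CTensor R G N') :=
  rfl

lemma mapRight_mapLeft (f : G →ₗ[Rᵐᵒᵖ] G') (d : N →ₗ[R] N') (x : CTensor R G N) :
    mapRight R G' d (mapLeft R N f x) = mapLeft R N' f (mapRight R G d x) := by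
  obtain ⟨t, rfl⟩ := Submodule.Quotient.mk_surjective _ x
  rw [mapLeft_mk, mapRight_mk, mapRight_mk, mapLeft_mk, ← LinearMap.comp_apply,
    ← LinearMap.comp_apply, LinearMap.lTensor_comp_rTensor, LinearMap.rTensor_comp_lTensor]

lemma mapLeft_comp (f : G →ₗ[Rᵐᵒᵖ] G') (g : G' →ₗ[Rᵐᵒᵖ] G'') (x : CTensor R G N) :
    mapLeft R N (g.comp f) x = mapLeft R N g (mapLeft R N f x) := by
  obtain ⟨t, rfl⟩ := Submodule.Quotient.mk_surjective _ x
  exact congrArg Submodule.Quotient.mk (LinearMap.rTensor_comp_apply N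
    g.toAddMonoidHom.toIntLinearMap f.toAddMonoidHom.toIntLinearMap t)

lemma mapLeft_id (x : CTensor R G N) : mapLeft R N (LinearMap.id : G →ₗ[Rᵐᵒᵖ] G) x = x := by
  obtain ⟨t, rfl⟩ := Submodule.Quotient.mk_surjective _ x
  exact congrArg Submodule.Quotient.mk (LinearMap.rTensor_id_apply N G t :)

lemma mapLeft_zero (x : CTensor R G N) : mapLeft R N (0 : G →ₗ[Rᵐᵒᵖ] G') x = 0 := by
  obtain ⟨t, rfl⟩ := Submodule.Quotient.mk_surjective _ x
  exact congrArg Submodule.Quotient.mk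
    (LinearMap.congr_fun (LinearMap.rTensor_zero (M := N) (N := G) (P := G') (R := ℤ)) t)

lemma mapRight_comp (d : N →ₗ[R] N') (d' : N' →ₗ[R] N'') (x : CTensor R G N) :
    mapRight R G (d'.comp d) x = mapRight R G d' (mapRight R G d x) := by
  obtain ⟨t, rfl⟩ := Submodule.Quotient.mk_surjective _ x
  exact congrArg Submodule.Quotient.mk (LinearMap.lTensor_comp_apply G
    d'.toAddMonoidHom.toIntLinearMap d.toAddMonoidHom.toIntLinearMap t)

lemma mapRight_zero (x : CTensor R G N) : mapRight R G (0 : N →ₗ[R] N') x = 0 := by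
  obtain ⟨t, rfl⟩ := Submodule.Quotient.mk_surjective _ x
  exact congrArg Submodule.Quotient.mk
    (LinearMap.congr_fun (LinearMap.lTensor_zero (M := G) (N := N) (P := N') (R := ℤ)) t)

lemma mapLeft_surjective {g : G' →ₗ[Rᵐᵒᵖ] G''} (hg : Surjective g) :
    Surjective (mapLeft R N g) := by
  intro x
  obtain ⟨t, rfl⟩ := Submodule.Quotient.mk_surjective _ x
  obtain ⟨s, rfl⟩ := LinearMap.rTensor_surjective N (g := g.toAddMonoidHom.toIntLinearMap) hg t
  exact ⟨Submodule.Quotient.mk s, rfl⟩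

lemma crel_le_map_rTensor {g : G' →ₗ[Rᵐᵒᵖ] G''} (hg : Surjective g) :
    crel R G'' N ≤ (crel R G' N).map (LinearMap.rTensor N g.toAddMonoidHom.toIntLinearMap) := by
  refine Submodule.span_le.mpr ?_
  rintro _ ⟨g'', r, n, rfl⟩
  obtain ⟨m, rfl⟩ := hg g''
  refine ⟨(op r • m) ⊗ₜ[ℤ] n - m ⊗ₜ[ℤ] (r • n), Submodule.subset_span ⟨m, r, n, rfl⟩, ?_⟩
  simp only [map_sub, LinearMap.rTensor_tmul]
  exact congrArg (· ⊗ₜ[ℤ] n - _) (g.map_smul (op r) m)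

lemma exact_mapLeft {f : G →ₗ[Rᵐᵒᵖ] G'} {g : G' →ₗ[Rᵐᵒᵖ] G''} (hfg : Function.Exact f g)
    (hg : Surjective g) : Function.Exact (mapLeft R N f) (mapLeft R N g) := by
  intro x
  refine ⟨fun hx => ?_, ?_⟩
  · obtain ⟨t, rfl⟩ := Submodule.Quotient.mk_surjective _ x
    rw [mapLeft_mk] at hx
    have ht : LinearMap.rTensor N g.toAddMonoidHom.toIntLinearMap t ∈ crel R G'' N :=
      (Submodule.Quotient.mk_eq_zero _).mp hx
    obtain ⟨c, hc, hct⟩ := Submodule.mem_map.1 (crel_le_map_rTensor hg ht)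
    have hexact_rTensor := rTensor_exact N (f := f.toAddMonoidHom.toIntLinearMap)
      (g := g.toAddMonoidHom.toIntLinearMap) hfg hg
    have hker : LinearMap.rTensor N g.toAddMonoidHom.toIntLinearMap (t - c) = 0 := by
      rw [map_sub, hct, sub_self]
    obtain ⟨s, hs⟩ := (hexact_rTensor (t - c)).mp hker
    refine ⟨Submodule.Quotient.mk s, ?_⟩
    rw [mapLeft_mk, hs]
    refine (Submodule.Quotient.eq _).2 ?_
    simpa using Submodule.neg_mem _ hc
  · rintro ⟨y, rfl⟩
    rw [← mapLeft_comp, hfg.linearMap_comp_eq_zero, mapLeft_zero]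

end CTensor

namespace Cx

variable (C : Cx R)

def toCycles (i : ℤ) : C.X i →ₗ[R] LinearMap.ker (C.d (i + 1)) :=
  (C.d i).codRestrict _ fun x => LinearMap.mem_ker.2 (LinearMap.congr_fun (C.dd i) x)

lemma exact_subtype_toCycles (i : ℤ) :
    Function.Exact (LinearMap.ker (C.d i)).subtype (C.toCycles i) := by
  rw [LinearMap.exact_iff, toCycles, LinearMap.ker_codRestrict, Submodule.range_subtype]

lemma toCycles_surjective {i : ℤ}
    (h : ∀ x : C.X (i + 1), C.d (i + 1) x = 0 → ∃ y : C.X i, C.d i y = x) :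
    Surjective (C.toCycles i) := by
  rintro ⟨x, hx⟩
  obtain ⟨y, rfl⟩ := h x hx
  exact ⟨y, rfl⟩

end Cx

namespace TensorExact

variable {M M₀ X M' : Type u} [AddCommGroup M] [Module Rᵐᵒᵖ M] [AddCommGroup M₀]
  [Module Rᵐᵒᵖ M₀] [AddCommGroup X] [Module Rᵐᵒᵖ X] [AddCommGroup M'] [Module Rᵐᵒᵖ M']
  {P : Cx R}

lemma of_linearEquiv (e : M ≃ₗ[Rᵐᵒᵖ] M₀) (h : TensorExact R M₀ P) : TensorExact R M P := by
  intro n x hx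
  obtain ⟨y, hy⟩ := h n (CTensor.mapLeft R _ e.toLinearMap x) (by
    rw [CTensor.mapRight_mapLeft, hx, map_zero])
  refine ⟨CTensor.mapLeft R _ e.symm.toLinearMap y, ?_⟩
  rw [CTensor.mapRight_mapLeft, hy, ← CTensor.mapLeft_comp, e.symm_comp, CTensor.mapLeft_id]

/-- The kernel case of the long exact homology sequence of
`0 → M ⊗ P → X ⊗ P → M' ⊗ P → 0`. -/
lemma of_shortExact {f : M →ₗ[Rᵐᵒᵖ] X} {g : X →ₗ[Rᵐᵒᵖ] M'} (hfg : Function.Exact f g)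
    (hg : Surjective g) (hf : ∀ n, Injective (CTensor.mapLeft R (P.X n) f))
    (hX : TensorExact R X P) (hM' : TensorExact R M' P) : TensorExact R M P := by
  intro n x hx
  obtain ⟨k, rfl⟩ : ∃ k : ℤ, k + 1 = n := ⟨n - 1, by ring⟩
  obtain ⟨y, hy⟩ := hX (k + 1) (CTensor.mapLeft R _ f x) (by
    rw [CTensor.mapRight_mapLeft, hx, map_zero])
  obtain ⟨w, hw⟩ := hM' k (CTensor.mapLeft R _ g y) (by
    rw [CTensor.mapRight_mapLeft, hy, ← CTensor.mapLeft_comp, hfg.linearMap_comp_eq_zero,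
      CTensor.mapLeft_zero])
  obtain ⟨v, rfl⟩ := CTensor.mapLeft_surjective hg w
  obtain ⟨z, hz⟩ := (CTensor.exact_mapLeft hfg hg (y - CTensor.mapRight R X (P.d k) v)).1 (by
    rw [map_sub, ← CTensor.mapRight_mapLeft, hw, sub_self])
  refine ⟨z, hf _ ?_⟩
  rw [← CTensor.mapRight_mapLeft, hz, map_sub, hy, ← CTensor.mapRight_comp, P.dd,
    CTensor.mapRight_zero, sub_zero]

end TensorExact

lemma tensorExact_ker_of_finite_coresolution {P : Cx R} (hflat : ∀ n, IsFlatMod R (P.X n))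
    (C : Cx Rᵐᵒᵖ) (n : ℕ) [Subsingleton (C.X (n + 1))]
    (hC : ∀ i : ℤ, 0 ≤ i → i ≤ n → TensorExact R (C.X i) P)
    (hCexact : ∀ i : ℤ, 0 ≤ i → ∀ x : C.X (i + 1), C.d (i + 1) x = 0 → ∃ y, C.d i y = x) :
    TensorExact R (LinearMap.ker (C.d 0)) P := by
  suffices h : ∀ k ≤ n, TensorExact R (LinearMap.ker (C.d k)) P by
    simpa using h 0 n.zero_le
  intro k hk
  induction hk using Nat.decreasingInduction with
  | self =>
    have hker : LinearMap.ker (C.d n) = ⊤ := LinearMap.ker_eq_top.2 (Subsingleton.elim _ _)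
    exact (hC n n.cast_nonneg le_rfl).of_linearEquiv (LinearEquiv.ofTop _ hker)
  | of_succ k hk ih =>
    rw [Nat.cast_succ] at ih
    exact .of_shortExact (C.exact_subtype_toCycles k)
      (C.toCycles_surjective (hCexact k k.cast_nonneg))
      (fun j => hflat j (Mdl.of _ (LinearMap.ker (C.d k))) (Mdl.of _ (C.X k)) _
        (Submodule.injective_subtype _))
      (hC k k.cast_nonneg (by omega)) ih

end DualityPairs

open DualityPairs MulOpposite Function

theorem statement15_general (B : Type u) [Ring B]
    (F₂ : Mdl.{u} Bᵐᵒᵖ → Prop)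
    (M : Type u) [AddCommGroup M] [Module Bᵐᵒᵖ M]
    (hM : FiniteXInjDim Bᵐᵒᵖ F₂ M)
    (P : Cx B)
    (hflat : ∀ n, IsFlatMod B (P.X n))
    (htens : ∀ D : Mdl.{u} Bᵐᵒᵖ, F₂ D → TensorExact B (D : Type u) P) :
    TensorExact B M P := by
  obtain ⟨n, C, hbounded, hmem, hC, ⟨e⟩⟩ := hM
  have : Subsingleton (C.X (n + 1)) := hbounded _ (.inr (by omega))
  exact (tensorExact_ker_of_finite_coresolution hflat C n (fun i h0 hn => htens _ (hmem i h0 hn))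
    hC).of_linearEquiv e

/-- used in the proof of Theorem 3.4.  Let `F₂` be a class of right
`B`-modules, `M` a right `B`-module of finite `F₂`-injective dimension, and `P` an exact
complex of flat left `B`-modules such that `D ⊗_B P` is exact for every `D ∈ F₂`.  Then
`M ⊗_B P` is exact. -/
theorem statement15 (B : Type u) [Ring B]
    (F₂ : Mdl.{u} Bᵐᵒᵖ → Prop)
    (M : Type u) [AddCommGroup M] [Module Bᵐᵒᵖ M]
    (hM : FiniteXInjDim Bᵐᵒᵖ F₂ M)
    (P : Cx B)
    (hflat : ∀ n, IsFlatMod B (P.X n))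
    (hexact : P.Exact)
    (htens : ∀ D : Mdl.{u} Bᵐᵒᵖ, F₂ D → TensorExact B (D : Type u) P) :
    TensorExact B M P :=
  statement15_general B F₂ M hM P hflat htens
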